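/- arXiv:2204.02215 — 2 statements merged into one kernel-verified Lean document; each statement's English description precedes it below -/
import Mathlib

section
/- Let f : ℝ → ℝ be infinitely differentiable in a neighborhood of η₀ ∈ ℝ and satisfy the Blasius equation f'''(η) + (1/2)·f(η)·f''(η) = 0 for all η in that neighborhood. Then the differential transform F of f at η₀ satisfies, for every k ∈ ℕ, the recurrence F(k+3) = − (Σ_{l=0}^{k} (l+1)(l+2)·F(l+2)·F(k−l)) / (2(k+1)(k+2)(k+3)). -/
lemma blasiusL1 {s : Set ℝ} (hs : IsOpen s) {f : ℝ → ℝ} (hf : ContDiffOn ℝ (⊤ : ℕ∞) f s) (n : ℕ) :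
    ContDiffOn ℝ (⊤ : ℕ∞) (iteratedDeriv n f) s := by
  induction n with
  | zero => simpa using hf
  | succ n ih =>
      rw [iteratedDeriv_succ]
      exact ih.deriv_of_isOpen hs (by simp)

lemma blasiusL2 {s : Set ℝ} (hs : IsOpen s) {f : ℝ → ℝ} (hf : ContDiffOn ℝ (⊤ : ℕ∞) f s) (c : ℝ)
    (n : ℕ) : ∀ x ∈ s, iteratedDeriv n (fun y => c * f y) x = c * iteratedDeriv n f x := by
  induction n with
  | zero => intro x hx; simp
  | succ n ih =>
      intro x hx
      rw [iteratedDeriv_succ, iteratedDeriv_succ]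
      have h1 : deriv (iteratedDeriv n fun y => c * f y) x
          = deriv (fun y => c * iteratedDeriv n f y) x := by
        apply Filter.EventuallyEq.deriv_eq
        filter_upwards [hs.mem_nhds hx] with y hy using ih y hy
      have hd : DifferentiableAt ℝ (iteratedDeriv n f) x :=
        ((blasiusL1 hs hf n).differentiableOn (by simp)).differentiableAt (hs.mem_nhds hx)
      rw [h1, deriv_const_mul c hd]

lemma blasiusPascal (F G : ℕ → ℝ) (n : ℕ) :
    ∑ l ∈ Finset.range (n + 1),
        (n.choose l : ℝ) * (F (l + 1) * G (n - l) + F l * G (n - l + 1))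
      = ∑ l ∈ Finset.range (n + 1 + 1), ((n + 1).choose l : ℝ) * F l * G (n + 1 - l) := by
  rw [Finset.sum_range_succ' (fun l => ((n + 1).choose l : ℝ) * F l * G (n + 1 - l))]
  simp only [Nat.choose_succ_succ, Nat.succ_eq_add_one, Nat.cast_add, Nat.choose_zero_right,
    Nat.cast_one, one_mul, Nat.sub_zero, mul_add, add_mul, Finset.sum_add_distrib]
  have e1 : ∑ l ∈ Finset.range (n + 1), (n.choose l : ℝ) * F (l + 1) * G (n + 1 - (l + 1))
      = ∑ l ∈ Finset.range (n + 1), (n.choose l : ℝ) * (F (l + 1) * G (n - l)) :=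
    Finset.sum_congr rfl fun l hl => by
      have : n + 1 - (l + 1) = n - l := by omega
      rw [this]; ring
  have e2 : ∑ l ∈ Finset.range (n + 1), (n.choose (l + 1) : ℝ) * F (l + 1) * G (n + 1 - (l + 1))
      = ∑ l ∈ Finset.range n, (n.choose (l + 1) : ℝ) * F (l + 1) * G (n - l) := by
    rw [Finset.sum_range_succ]
    simp only [Nat.choose_succ_self, Nat.cast_zero, zero_mul, add_zero]
    exact Finset.sum_congr rfl fun l hl => by
      have : n + 1 - (l + 1) = n - l := by omega
      rw [this]
  rw [e1, e2]
  have h2 : ∑ l ∈ Finset.range (n + 1), (n.choose l : ℝ) * (F l * G (n - l + 1))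
      = F 0 * G (n + 1) + ∑ l ∈ Finset.range n, (n.choose (l + 1) : ℝ) * F (l + 1) * G (n - l) := by
    rw [Finset.sum_range_succ' (fun l => (n.choose l : ℝ) * (F l * G (n - l + 1)))]
    simp only [Nat.choose_zero_right, Nat.cast_one, one_mul, Nat.sub_zero]
    rw [add_comm]
    congr 1
    apply Finset.sum_congr rfl
    intro l hl
    have : n - (l + 1) + 1 = n - l := by
      simp only [Finset.mem_range] at hl; omega
    rw [this]; ring
  rw [h2]
  ring

lemma blasiusLeibniz {s : Set ℝ} (hs : IsOpen s) {f g : ℝ → ℝ}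
    (hf : ContDiffOn ℝ (⊤ : ℕ∞) f s) (hg : ContDiffOn ℝ (⊤ : ℕ∞) g s) (n : ℕ) :
    ∀ x ∈ s, iteratedDeriv n (fun y => f y * g y) x =
      ∑ l ∈ Finset.range (n + 1),
        (n.choose l : ℝ) * iteratedDeriv l f x * iteratedDeriv (n - l) g x := by
  induction n with
  | zero => intro x hx; simp
  | succ n ih =>
      intro x hx
      rw [iteratedDeriv_succ]
      have h1 : deriv (iteratedDeriv n fun y => f y * g y) x
          = deriv (fun y => ∑ l ∈ Finset.range (n + 1),
              (n.choose l : ℝ) * iteratedDeriv l f y * iteratedDeriv (n - l) g y) x := by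
        apply Filter.EventuallyEq.deriv_eq
        filter_upwards [hs.mem_nhds hx] with y hy using ih y hy
      rw [h1]
      have hdf : ∀ m : ℕ, HasDerivAt (iteratedDeriv m f) (iteratedDeriv (m + 1) f x) x := by
        intro m
        have hd : DifferentiableAt ℝ (iteratedDeriv m f) x :=
          ((blasiusL1 hs hf m).differentiableOn (by simp)).differentiableAt (hs.mem_nhds hx)
        simpa [iteratedDeriv_succ] using hd.hasDerivAt
      have hdg : ∀ m : ℕ, HasDerivAt (iteratedDeriv m g) (iteratedDeriv (m + 1) g x) x := by
        intro m
        have hd : DifferentiableAt ℝ (iteratedDeriv m g) x :=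
          ((blasiusL1 hs hg m).differentiableOn (by simp)).differentiableAt (hs.mem_nhds hx)
        simpa [iteratedDeriv_succ] using hd.hasDerivAt
      have hterm : ∀ l ∈ Finset.range (n + 1),
          HasDerivAt (fun y => (n.choose l : ℝ) * iteratedDeriv l f y * iteratedDeriv (n - l) g y)
            ((n.choose l : ℝ) * (iteratedDeriv (l + 1) f x * iteratedDeriv (n - l) g x
              + iteratedDeriv l f x * iteratedDeriv (n - l + 1) g x)) x := by
        intro l _
        have := (((hdf l).const_mul (n.choose l : ℝ)).fun_mul (hdg (n - l)))
        convert this using 1 <;> try rfl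
        ring
      rw [(HasDerivAt.fun_sum hterm).deriv]
      exact blasiusPascal (fun m => iteratedDeriv m f x) (fun m => iteratedDeriv m g x) n

/-- The differential transform of a solution of the Blasius equation satisfies the
recurrence `F(k+3) = −(∑_{l=0}^{k} (l+1)(l+2) F(l+2) F(k−l)) / (2(k+1)(k+2)(k+3))`. -/
theorem blasius_dt_recurrence (η₀ : ℝ) (f : ℝ → ℝ) (s : Set ℝ) (hs : s ∈ nhds η₀)
    (hf : ContDiffOn ℝ (⊤ : ℕ∞) f s)
    (heq : ∀ η ∈ s,
      iteratedDeriv 3 f η + (1 / 2) * (f η * iteratedDeriv 2 f η) = 0) :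
    ∀ k : ℕ,
      iteratedDeriv (k + 3) f η₀ / (Nat.factorial (k + 3) : ℝ) =
        -(∑ l ∈ Finset.range (k + 1),
            ((l : ℝ) + 1) * ((l : ℝ) + 2) *
              (iteratedDeriv (l + 2) f η₀ / (Nat.factorial (l + 2) : ℝ)) *
              (iteratedDeriv (k - l) f η₀ / (Nat.factorial (k - l) : ℝ))) /
          (2 * ((k : ℝ) + 1) * ((k : ℝ) + 2) * ((k : ℝ) + 3)) := by
  intro k
  set t := interior s with ht_def
  have ht : IsOpen t := isOpen_interior
  have hη : η₀ ∈ t := mem_interior_iff_mem_nhds.mpr hs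
  have hft : ContDiffOn ℝ (⊤ : ℕ∞) f t := hf.mono interior_subset
  have hf2 : ContDiffOn ℝ (⊤ : ℕ∞) (iteratedDeriv 2 f) t := blasiusL1 ht hft 2
  have hprod : ContDiffOn ℝ (⊤ : ℕ∞) (fun y => iteratedDeriv 2 f y * f y) t := hf2.mul hft
  -- Step 1: `f⁽ᵏ⁺³⁾ = (f''')⁽ᵏ⁾`
  have step1 : iteratedDeriv (k + 3) f η₀ = iteratedDeriv k (iteratedDeriv 3 f) η₀ := by
    simp only [iteratedDeriv_eq_iterate]
    exact congrFun (Function.iterate_add_apply deriv k 3 f) η₀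
  -- Step 2: replace `f'''` by `-(1/2) f'' f` near `η₀`
  have step2 : iteratedDeriv k (iteratedDeriv 3 f) η₀
      = iteratedDeriv k (fun y => -(1 / 2) * (iteratedDeriv 2 f y * f y)) η₀ := by
    apply Filter.EventuallyEq.iteratedDeriv_eq
    filter_upwards [ht.mem_nhds hη] with y hy
    have := heq y (interior_subset hy)
    nlinarith [this]
  have step3 : iteratedDeriv k (fun y => -(1 / 2) * (iteratedDeriv 2 f y * f y)) η₀
      = -(1 / 2) * iteratedDeriv k (fun y => iteratedDeriv 2 f y * f y) η₀ :=
    blasiusL2 ht hprod (-(1 / 2)) k η₀ hη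
  have step4 : iteratedDeriv k (fun y => iteratedDeriv 2 f y * f y) η₀
      = ∑ l ∈ Finset.range (k + 1),
          (k.choose l : ℝ) * iteratedDeriv (l + 2) f η₀ * iteratedDeriv (k - l) f η₀ := by
    rw [blasiusLeibniz ht hf2 hft k η₀ hη]
    refine Finset.sum_congr rfl fun l _ => ?_
    have : iteratedDeriv l (iteratedDeriv 2 f) η₀ = iteratedDeriv (l + 2) f η₀ := by
      simp only [iteratedDeriv_eq_iterate]
      exact (congrFun (Function.iterate_add_apply deriv l 2 f) η₀).symm
    rw [this]
  have key : iteratedDeriv (k + 3) f η₀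
      = -(1 / 2) * ∑ l ∈ Finset.range (k + 1),
          (k.choose l : ℝ) * iteratedDeriv (l + 2) f η₀ * iteratedDeriv (k - l) f η₀ := by
    rw [step1, step2, step3, step4]
  rw [key, Finset.mul_sum, Finset.sum_div, neg_div, Finset.sum_div, ← Finset.sum_neg_distrib]
  refine Finset.sum_congr rfl fun l hl => ?_
  have hlk : l ≤ k := by simp only [Finset.mem_range] at hl; omega
  have hc : (k.choose l : ℝ) = (k.factorial : ℝ) / ((l.factorial : ℝ) * ((k - l).factorial : ℝ)) :=
    Nat.cast_choose ℝ hlk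
  have hk3 : ((k + 3).factorial : ℝ)
      = ((k : ℝ) + 1) * ((k : ℝ) + 2) * ((k : ℝ) + 3) * (k.factorial : ℝ) := by
    simp only [show k + 3 = (k + 2) + 1 by ring, show k + 2 = (k + 1) + 1 by ring,
      Nat.factorial_succ]
    push_cast
    ring
  have hl2 : ((l + 2).factorial : ℝ) = ((l : ℝ) + 1) * ((l : ℝ) + 2) * (l.factorial : ℝ) := by
    simp only [show l + 2 = (l + 1) + 1 by ring, Nat.factorial_succ]
    push_cast
    ring
  have hkf : (k.factorial : ℝ) ≠ 0 := Nat.cast_ne_zero.mpr k.factorial_ne_zero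
  have hlf : (l.factorial : ℝ) ≠ 0 := Nat.cast_ne_zero.mpr l.factorial_ne_zero
  have hklf : ((k - l).factorial : ℝ) ≠ 0 := Nat.cast_ne_zero.mpr (k - l).factorial_ne_zero
  have h1 : ((k : ℝ) + 1) ≠ 0 := by positivity
  have h2 : ((k : ℝ) + 2) ≠ 0 := by positivity
  have h3 : ((k : ℝ) + 3) ≠ 0 := by positivity
  rw [hc, hk3, hl2]
  field_simp
end

section
/- Let f : ℝ → ℝ be infinitely differentiable in a neighborhood of 0, satisfy the Blasius equation f'''(η) + (1/2)·f(η)·f''(η) = 0 in that neighborhood, and satisfy f(0) = 0 and f'(0) = 0. Then for every k ∈ ℕ with k not congruent to 2 modulo 3, the k-th Taylor coefficient of f at 0 vanishes: f⁽ᵏ⁾(0)/k! = 0. -/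
open Filter Topology Set Finset

private lemma iterDW_isOpen {f : ℝ → ℝ} {s : Set ℝ} (hs : IsOpen s) {x : ℝ} (hx : x ∈ s)
    (n : ℕ) : iteratedDerivWithin n f s x = iteratedDeriv n f x := by
  rw [iteratedDerivWithin_eq_iteratedFDerivWithin, iteratedDeriv_eq_iteratedFDeriv,
    iteratedFDerivWithin_of_isOpen n hs hx]

private lemma iterD_add_of_isOpen {f g : ℝ → ℝ} {s : Set ℝ} (hs : IsOpen s) {x : ℝ} (hx : x ∈ s)
    (hf : ContDiffOn ℝ (⊤ : ℕ∞) f s) (hg : ContDiffOn ℝ (⊤ : ℕ∞) g s) (n : ℕ) :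
    iteratedDeriv n (fun y => f y + g y) x = iteratedDeriv n f x + iteratedDeriv n g x := by
  have h1 : iteratedDerivWithin n (f + g) s x =
      iteratedDerivWithin n f s x + iteratedDerivWithin n g s x :=
    iteratedDerivWithin_add hx hs.uniqueDiffOn ((hf x hx).of_le (by exact_mod_cast le_top)) ((hg x hx).of_le (by exact_mod_cast le_top))
  rw [iterDW_isOpen hs hx, iterDW_isOpen hs hx, iterDW_isOpen hs hx] at h1
  exact h1

private lemma iterD_const_mul_of_isOpen {f : ℝ → ℝ} {s : Set ℝ} (hs : IsOpen s) {x : ℝ}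
    (hx : x ∈ s) (hf : ContDiffOn ℝ (⊤ : ℕ∞) f s) (c : ℝ) (n : ℕ) :
    iteratedDeriv n (fun y => c * f y) x = c * iteratedDeriv n f x := by
  rw [← iterDW_isOpen hs hx, ← iterDW_isOpen (f := f) hs hx,
    iteratedDerivWithin_const_mul hx hs.uniqueDiffOn c ((hf x hx).of_le (by exact_mod_cast le_top))]

private lemma sum_pascal_aux (n : ℕ) (a b : ℕ → ℝ) :
    (∑ i ∈ Finset.range (n + 1), (n.choose i : ℝ) * a (i + 1) * b (n - i))
      + (∑ i ∈ Finset.range (n + 1), (n.choose i : ℝ) * a i * b (n + 1 - i))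
      = ∑ i ∈ Finset.range (n + 2), ((n + 1).choose i : ℝ) * a i * b (n + 1 - i) := by
  rw [Finset.sum_range_succ' (fun i => ((n + 1).choose i : ℝ) * a i * b (n + 1 - i)) (n + 1),
    Finset.sum_range_succ' (fun i => ((n).choose i : ℝ) * a i * b (n + 1 - i)) n]
  simp only [Nat.succ_sub_succ, Nat.choose_zero_right, Nat.cast_one, one_mul, Nat.add_sub_cancel]
  have h2 : ∑ i ∈ Finset.range (n + 1), ((n + 1).choose (i + 1) : ℝ) * a (i + 1) * b (n - i)
      = (∑ i ∈ Finset.range (n + 1), (n.choose i : ℝ) * a (i + 1) * b (n - i))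
        + ∑ i ∈ Finset.range (n + 1), (n.choose (i + 1) : ℝ) * a (i + 1) * b (n - i) := by
    rw [← Finset.sum_add_distrib]
    refine Finset.sum_congr rfl fun i _ => ?_
    rw [Nat.choose_succ_succ]
    push_cast
    ring
  have h3 : ∑ i ∈ Finset.range (n + 1), (n.choose (i + 1) : ℝ) * a (i + 1) * b (n - i)
      = ∑ i ∈ Finset.range n, (n.choose (i + 1) : ℝ) * a (i + 1) * b (n - i) := by
    rw [Finset.sum_range_succ, Nat.choose_succ_self]
    simp
  rw [h2, h3]
  ring

private lemma leibniz_of_isOpen : ∀ (n : ℕ) (f g : ℝ → ℝ) (s : Set ℝ), IsOpen s →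
    ContDiffOn ℝ (⊤ : ℕ∞) f s → ContDiffOn ℝ (⊤ : ℕ∞) g s → ∀ x ∈ s,
    iteratedDeriv n (fun y => f y * g y) x =
      ∑ i ∈ Finset.range (n + 1),
        (n.choose i : ℝ) * iteratedDeriv i f x * iteratedDeriv (n - i) g x := by
  intro n
  induction n with
  | zero => intro f g s hs hf hg x hx; simp
  | succ n IH =>
    intro f g s hs hf hg x hx
    have hf' : ContDiffOn ℝ (⊤ : ℕ∞) (deriv f) s := hf.deriv_of_isOpen hs (by simp)
    have hg' : ContDiffOn ℝ (⊤ : ℕ∞) (deriv g) s := hg.deriv_of_isOpen hs (by simp)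
    have dfa : ∀ (h : ℝ → ℝ), ContDiffOn ℝ (⊤ : ℕ∞) h s → ∀ y ∈ s, DifferentiableAt ℝ h y := by
      intro h hh y hy
      exact (hh.contDiffAt (hs.mem_nhds hy)).differentiableAt (by simp)
    have step : iteratedDeriv (n + 1) (fun y => f y * g y) x
        = iteratedDeriv n (fun y => deriv f y * g y + f y * deriv g y) x := by
      rw [iteratedDeriv_succ']
      refine Filter.EventuallyEq.iteratedDeriv_eq n ?_
      filter_upwards [hs.mem_nhds hx] with y hy
      exact deriv_mul (dfa f hf y hy) (dfa g hg y hy)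
    rw [step, iterD_add_of_isOpen hs hx (hf'.mul hg) (hf.mul hg'),
      IH (deriv f) g s hs hf' hg x hx, IH f (deriv g) s hs hf hg' x hx]
    have A : ∑ i ∈ Finset.range (n + 1),
        (n.choose i : ℝ) * iteratedDeriv i (deriv f) x * iteratedDeriv (n - i) g x
        = ∑ i ∈ Finset.range (n + 1),
        (n.choose i : ℝ) * iteratedDeriv (i + 1) f x * iteratedDeriv (n - i) g x :=
      Finset.sum_congr rfl (fun i _ => by rw [← iteratedDeriv_succ'])
    have B : ∑ i ∈ Finset.range (n + 1),
        (n.choose i : ℝ) * iteratedDeriv i f x * iteratedDeriv (n - i) (deriv g) x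
        = ∑ i ∈ Finset.range (n + 1),
        (n.choose i : ℝ) * iteratedDeriv i f x * iteratedDeriv (n + 1 - i) g x := by
      refine Finset.sum_congr rfl (fun i hi => ?_)
      have hin : i < n + 1 := Finset.mem_range.mp hi
      have hni : n + 1 - i = n - i + 1 := by omega
      rw [hni, iteratedDeriv_succ']
    rw [A, B]
    exact sum_pascal_aux n (fun i => iteratedDeriv i f x) (fun j => iteratedDeriv j g x)

private lemma iterD_shift : ∀ (m n : ℕ) (f : ℝ → ℝ),
    iteratedDeriv (n + m) f = iteratedDeriv n (iteratedDeriv m f) := by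
  intro m
  induction m with
  | zero => intro n f; simp
  | succ m IH =>
    intro n f
    rw [iteratedDeriv_succ' (n := m), ← IH n (deriv f), ← Nat.add_assoc, ← iteratedDeriv_succ']

/-- For the Blasius solution with `f(0)=0`, `f'(0)=0`, the Taylor coefficients at `0`
vanish for all indices `k` with `k % 3 ≠ 2`. -/
theorem blasius_taylor_coeff_vanish (f : ℝ → ℝ) (s : Set ℝ) (hs : s ∈ nhds (0 : ℝ))
    (hf : ContDiffOn ℝ (⊤ : ℕ∞) f s)
    (heq : ∀ η ∈ s,
      iteratedDeriv 3 f η + (1 / 2) * (f η * iteratedDeriv 2 f η) = 0)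
    (h0 : f 0 = 0) (h1 : deriv f 0 = 0) :
    ∀ k : ℕ, k % 3 ≠ 2 → iteratedDeriv k f 0 / (Nat.factorial k : ℝ) = 0 := by
  obtain ⟨U, hUs, hUo, hU0⟩ := mem_nhds_iff.mp hs
  have hfU : ContDiffOn ℝ (⊤ : ℕ∞) f U := hf.mono hUs
  have h2U : ContDiffOn ℝ (⊤ : ℕ∞) (iteratedDeriv 2 f) U := by
    have h2eq : iteratedDeriv 2 f = deriv (deriv f) := by
      rw [iteratedDeriv_succ, iteratedDeriv_one]
    rw [h2eq]
    exact (hfU.deriv_of_isOpen (m := ((⊤ : ℕ∞) : WithTop ℕ∞)) hUo (by simp)).deriv_of_isOpen (m := ((⊤ : ℕ∞) : WithTop ℕ∞)) hUo (by simp)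
  have main : ∀ k : ℕ, k % 3 ≠ 2 → iteratedDeriv k f 0 = 0 := by
    intro k
    induction k using Nat.strong_induction_on with
    | _ k IH =>
      intro hk
      obtain _ | _ | _ | n := k
      · simpa using h0
      · rw [iteratedDeriv_one]; exact h1
      · exact absurd rfl hk
      · -- k = n + 3
        have e1 : iteratedDeriv (n + 3) f 0 = iteratedDeriv n (iteratedDeriv 3 f) 0 :=
          congrFun (iterD_shift 3 n f) 0
        have e2 : iteratedDeriv n (iteratedDeriv 3 f) 0
            = iteratedDeriv n (fun y => (-(1 : ℝ) / 2) * (f y * iteratedDeriv 2 f y)) 0 := by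
          refine Filter.EventuallyEq.iteratedDeriv_eq n ?_
          filter_upwards [hUo.mem_nhds hU0] with y hy
          have := heq y (hUs hy)
          linarith
        have e3 : iteratedDeriv n (fun y => (-(1 : ℝ) / 2) * (f y * iteratedDeriv 2 f y)) 0
            = (-(1 : ℝ) / 2) * iteratedDeriv n (fun y => f y * iteratedDeriv 2 f y) 0 :=
          iterD_const_mul_of_isOpen hUo hU0 (hfU.mul h2U) _ n
        have e4 : iteratedDeriv n (fun y => f y * iteratedDeriv 2 f y) 0
            = ∑ i ∈ Finset.range (n + 1),
              (n.choose i : ℝ) * iteratedDeriv i f 0 * iteratedDeriv (n - i) (iteratedDeriv 2 f) 0 :=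
          leibniz_of_isOpen n f (iteratedDeriv 2 f) U hUo hfU h2U 0 hU0
        have hsum : ∑ i ∈ Finset.range (n + 1),
            (n.choose i : ℝ) * iteratedDeriv i f 0 * iteratedDeriv (n - i) (iteratedDeriv 2 f) 0
            = 0 := by
          refine Finset.sum_eq_zero fun i hi => ?_
          have hin : i < n + 1 := Finset.mem_range.mp hi
          by_cases hi3 : i % 3 = 2
          · have hlt : n - i + 2 < n + 3 := by omega
            have hmod : (n - i + 2) % 3 ≠ 2 := by omega
            have : iteratedDeriv (n - i) (iteratedDeriv 2 f) 0 = 0 := by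
              rw [← congrFun (iterD_shift 2 (n - i) f) 0]
              exact IH (n - i + 2) hlt hmod
            rw [this, mul_zero]
          · have : iteratedDeriv i f 0 = 0 := IH i (by omega) hi3
            rw [this, mul_zero, zero_mul]
        rw [e1, e2, e3, e4, hsum, mul_zero]
  intro k hk
  rw [main k hk, zero_div]
end
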